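/- arXiv:2210.04129 — 2 statements merged into one kernel-verified Lean document; each statement's English description precedes it below -/
import Mathlib

section
/- Let f : [0,T) → [0,∞) be continuous, differentiable on (0,T), with f(0) = 0 and f'(t) ≤ d²/√(T−t) + (2M/√(T−t))·f(t) for all t ∈ (0,T), where d, M > 0 are constants. Then f(t) ≤ d² · (exp(4M(√T − √(T−t))) − 1)/(2M) for all t ∈ [0,T). -/
/-!
With `c = d² / (2M)` the hypothesis reads `(f + c)' ≤ k (f + c)` for the kernel `k s = 2M / √(T - s)`,
whose primitive is `K s = 4M (√T - √(T - s))`. Then `(f + c) e^{-K}` is antitone, so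
`f t + c ≤ c e^{K t}`.
-/

open Real Set

theorem le_mul_exp_sub_of_hasDerivAt_le_mul {f f' K k : ℝ → ℝ} {a b : ℝ} (hab : a ≤ b)
    (hf : ContinuousOn f (Icc a b)) (hK : ContinuousOn K (Icc a b))
    (hf' : ∀ s ∈ Ioo a b, HasDerivAt f (f' s) s) (hK' : ∀ s ∈ Ioo a b, HasDerivAt K (k s) s)
    (hbound : ∀ s ∈ Ioo a b, f' s ≤ k s * f s) :
    f b ≤ f a * exp (K b - K a) := by
  set ψ : ℝ → ℝ := fun s => f s * exp (-K s)
  have hψ' : ∀ s ∈ Ioo a b, HasDerivAt ψ ((f' s - k s * f s) * exp (-K s)) s := fun s hs =>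
    ((hf' s hs).mul (hK' s hs).neg.exp).congr_deriv (by simp only [Pi.neg_apply]; ring)
  have hψ : AntitoneOn ψ (Icc a b) := by
    refine antitoneOn_of_deriv_nonpos (convex_Icc a b)
      (hf.mul (hK.neg.rexp)) (fun s hs => ?_) (fun s hs => ?_) <;> rw [interior_Icc] at hs
    · exact (hψ' s hs).differentiableAt.differentiableWithinAt
    · rw [(hψ' s hs).deriv]
      exact mul_nonpos_of_nonpos_of_nonneg (by linarith [hbound s hs]) (exp_pos _).le
  have hψab : f b * exp (-K b) ≤ f a * exp (-K a) :=
    hψ (left_mem_Icc.2 hab) (right_mem_Icc.2 hab) hab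
  calc f b = f b * exp (-K b) * exp (K b) := by rw [mul_assoc, ← exp_add]; simp
    _ ≤ f a * exp (-K a) * exp (K b) := by gcongr
    _ = f a * exp (K b - K a) := by rw [mul_assoc, ← exp_add]; ring_nf

theorem hasDerivAt_sqrt_const_sub {T s : ℝ} (hs : s < T) :
    HasDerivAt (fun x => √(T - x)) (-1 / (2 * √(T - s))) s := by
  simpa using ((hasDerivAt_id s).const_sub T).sqrt (sub_pos.2 hs).ne'

theorem gronwall_singular_kernel_general (T d M : ℝ) (hM : 0 < M)
    (f f' : ℝ → ℝ)
    (hf_cont : ContinuousOn f (Set.Ico 0 T))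
    (hf_deriv : ∀ t ∈ Set.Ioo (0 : ℝ) T, HasDerivAt f (f' t) t)
    (hf0 : f 0 = 0)
    (hf'_bound : ∀ t ∈ Set.Ioo (0 : ℝ) T,
      f' t ≤ d ^ 2 / Real.sqrt (T - t) + (2 * M / Real.sqrt (T - t)) * f t) :
    ∀ t ∈ Set.Ico (0 : ℝ) T,
      f t ≤ d ^ 2 * (Real.exp (4 * M * (Real.sqrt T - Real.sqrt (T - t))) - 1) / (2 * M) := by
  rintro t ⟨ht0, htT⟩
  have hsub : Ioo 0 t ⊆ Ioo 0 T := Ioo_subset_Ioo_right htT.le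
  set c := d ^ 2 / (2 * M)
  have hK' : ∀ s ∈ Ioo 0 t,
      HasDerivAt (fun x => 4 * M * (√T - √(T - x))) (2 * M / √(T - s)) s := fun s hs =>
    (((hasDerivAt_sqrt_const_sub (hsub hs).2).const_sub _).const_mul _).congr_deriv
      (by field_simp; ring)
  have hbound : ∀ s ∈ Ioo 0 t, f' s ≤ 2 * M / √(T - s) * (f s + c) := fun s hs => by
    have hc : 2 * M / √(T - s) * c = d ^ 2 / √(T - s) := by simp only [c]; field_simp
    linarith [hf'_bound s (hsub hs)]
  have key := le_mul_exp_sub_of_hasDerivAt_le_mul (f := fun s => f s + c) ht0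
    ((hf_cont.mono (Icc_subset_Ico_right htT)).add continuousOn_const) (by fun_prop)
    (fun s hs => (hf_deriv s (hsub hs)).add_const c) hK' hbound
  simp only [hf0, zero_add, sub_zero, sub_self, mul_zero] at key
  have hrhs : d ^ 2 * (exp (4 * M * (√T - √(T - t))) - 1) / (2 * M)
      = c * exp (4 * M * (√T - √(T - t))) - c := by ring
  rw [hrhs]
  linarith

theorem gronwall_singular_kernel (T d M : ℝ) (hT : 0 < T) (hd : 0 < d) (hM : 0 < M)
    (f f' : ℝ → ℝ)
    (hf_cont : ContinuousOn f (Set.Ico 0 T))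
    (hf_nonneg : ∀ t ∈ Set.Ico (0 : ℝ) T, 0 ≤ f t)
    (hf_deriv : ∀ t ∈ Set.Ioo (0 : ℝ) T, HasDerivAt f (f' t) t)
    (hf0 : f 0 = 0)
    (hf'_bound : ∀ t ∈ Set.Ioo (0 : ℝ) T,
      f' t ≤ d ^ 2 / Real.sqrt (T - t) + (2 * M / Real.sqrt (T - t)) * f t) :
    ∀ t ∈ Set.Ico (0 : ℝ) T,
      f t ≤ d ^ 2 * (Real.exp (4 * M * (Real.sqrt T - Real.sqrt (T - t))) - 1) / (2 * M) :=
  gronwall_singular_kernel_general T d M hM f f' hf_cont hf_deriv hf0 hf'_bound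
end

section
/- Let B be a standard d-dimensional Brownian motion, τ ≥ 0, x ∈ ℝ^d, and X_s = B_s − B_τ + x for s ≥ τ. Then for α ≥ 0, β > 0 and t > s > τ, the moment I = E[(|y−X_s|/(t−s))^{αβ} G_{t−s}(y−X_s)^β] equals C₁ · t₁^{−(d(β−1)/2 + αβ)} · G_{t₁+t₂}(y−x) · ∫_{ℝ^d} |√(t₁t₂/(t₁+t₂)) z + t₁(x−y)/(t₁+t₂)|^{αβ} G₁(z) dz, where t₁ = β^{−1}(t−s), t₂ = s−τ, and C₁ = (2π)^{−d(β−1)/2} β^{−(d/2+α)β}. -/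
/-!
Raising `G_{t-s}` to the power `β` gives, up to an explicit constant, the Gaussian `G_{t₁}` with
`t₁ = (t - s)/β`, and the moment factor `(|w|/(t-s))^{αβ}` is homogeneous. Against the law of
`X_s` the integrand is thus a constant times `|y - z|^{αβ} G_{t₁}(y - z) G_{t₂}(z - x)`; completing
the square turns the two Gaussians into `G_c(z - m) G_{t₁+t₂}(y - x)` with
`c = t₁t₂/(t₁+t₂)`, `m = (t₁x + t₂y)/(t₁+t₂)`, and `z = √c u + m` normalises the remaining integral.
-/

open Real MeasureTheory

noncomputable def G (d : ℕ) (t : ℝ) (x : EuclideanSpace ℝ (Fin d)) : ℝ :=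
  (2 * π * t) ^ (-(d : ℝ) / 2) * Real.exp (-‖x‖ ^ 2 / (2 * t))

theorem norm_smul_add_smul_sq_add_mul_norm_sub_sq {E : Type*} [NormedAddCommGroup E]
    [InnerProductSpace ℝ E] (t₁ t₂ : ℝ) (a b : E) :
    ‖t₁ • a + t₂ • b‖ ^ 2 + t₁ * t₂ * ‖a - b‖ ^ 2 =
      (t₁ + t₂) * (t₁ * ‖a‖ ^ 2 + t₂ * ‖b‖ ^ 2) := by
  rw [norm_add_sq_real, norm_sub_sq_real, norm_smul, norm_smul, real_inner_smul_left,
    real_inner_smul_right, mul_pow, mul_pow, Real.norm_eq_abs, Real.norm_eq_abs, sq_abs, sq_abs]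
  ring

section G

variable {d : ℕ}

theorem G_pos {t : ℝ} (ht : 0 < t) (z : EuclideanSpace ℝ (Fin d)) : 0 < G d t z := by
  unfold G; positivity

@[fun_prop]
theorem continuous_G (d : ℕ) (t : ℝ) : Continuous (G d t) := by
  unfold G; fun_prop

theorem G_rpow {β u : ℝ} (hβ : 0 < β) (hu : 0 < u) (w : EuclideanSpace ℝ (Fin d)) :
    G d (β * u) w ^ β =
      (2 * π) ^ (-(d : ℝ) * (β - 1) / 2) * β ^ (-(d : ℝ) / 2 * β) *
        u ^ (-(d : ℝ) * (β - 1) / 2) * G d u w := by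
  have h2π : 0 < 2 * π := by positivity
  have hexp : -‖w‖ ^ 2 / (2 * (β * u)) * β = -‖w‖ ^ 2 / (2 * u) := by field_simp
  have hprefactor : (2 * π * (β * u)) ^ (-(d : ℝ) / 2 * β) =
      (2 * π) ^ (-(d : ℝ) * (β - 1) / 2) * β ^ (-(d : ℝ) / 2 * β) *
        u ^ (-(d : ℝ) * (β - 1) / 2) * (2 * π * u) ^ (-(d : ℝ) / 2) := by
    have hsplit : (2 * π * u) ^ (-(d : ℝ) / 2 * β) =
        (2 * π * u) ^ (-(d : ℝ) * (β - 1) / 2) * (2 * π * u) ^ (-(d : ℝ) / 2) := by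
      rw [← rpow_add (by positivity)]; ring_nf
    rw [show 2 * π * (β * u) = β * (2 * π * u) by ring, mul_rpow hβ.le (by positivity), hsplit,
      mul_rpow h2π.le hu.le]
    ring
  unfold G
  rw [mul_rpow (by positivity) (exp_pos _).le, ← rpow_mul (by positivity), ← exp_mul, hexp,
    hprefactor]
  ring

theorem G_mul_G {t₁ t₂ : ℝ} (h₁ : 0 < t₁) (h₂ : 0 < t₂) (x y z : EuclideanSpace ℝ (Fin d)) :
    G d t₁ (y - z) * G d t₂ (z - x) =
      G d (t₁ * t₂ / (t₁ + t₂)) (z - (t₁ + t₂)⁻¹ • (t₁ • x + t₂ • y)) *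
        G d (t₁ + t₂) (y - x) := by
  have hT : 0 < t₁ + t₂ := by positivity
  have hprefactor : (2 * π * t₁) ^ (-(d : ℝ) / 2) * (2 * π * t₂) ^ (-(d : ℝ) / 2) =
      (2 * π * (t₁ * t₂ / (t₁ + t₂))) ^ (-(d : ℝ) / 2) *
        (2 * π * (t₁ + t₂)) ^ (-(d : ℝ) / 2) := by
    rw [← mul_rpow (by positivity) (by positivity), ← mul_rpow (by positivity) (by positivity)]
    field_simp
  have hcentre : z - (t₁ + t₂)⁻¹ • (t₁ • x + t₂ • y) =
      (t₁ + t₂)⁻¹ • (t₁ • (z - x) + t₂ • (z - y)) := by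
    match_scalars <;> field_simp
  have hexponent : -‖y - z‖ ^ 2 / (2 * t₁) + -‖z - x‖ ^ 2 / (2 * t₂) =
      -‖z - (t₁ + t₂)⁻¹ • (t₁ • x + t₂ • y)‖ ^ 2 / (2 * (t₁ * t₂ / (t₁ + t₂))) +
        -‖y - x‖ ^ 2 / (2 * (t₁ + t₂)) := by
    have key := norm_smul_add_smul_sq_add_mul_norm_sub_sq t₁ t₂ (z - x) (z - y)
    rw [sub_sub_sub_cancel_left] at key
    rw [hcentre, norm_smul, mul_pow, norm_inv, Real.norm_of_nonneg hT.le, norm_sub_rev y z]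
    field_simp
    linear_combination key
  unfold G
  rw [mul_mul_mul_comm, hprefactor, ← exp_add, hexponent, exp_add]
  ring

theorem rpow_div_mul_G_rpow {α β u : ℝ} (hβ : 0 < β) (hu : 0 < u)
    (w : EuclideanSpace ℝ (Fin d)) :
    (‖w‖ / (β * u)) ^ (α * β) * G d (β * u) w ^ β =
      (2 * π) ^ (-(d : ℝ) * (β - 1) / 2) * β ^ (-((d : ℝ) / 2 + α) * β) *
        u ^ (-((d : ℝ) * (β - 1) / 2 + α * β)) * (‖w‖ ^ (α * β) * G d u w) := by
  have hβpow : β ^ (-((d : ℝ) / 2 + α) * β) = β ^ (-(d : ℝ) / 2 * β) * β ^ (-(α * β)) := by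
    rw [← rpow_add hβ]; ring_nf
  have hupow : u ^ (-((d : ℝ) * (β - 1) / 2 + α * β)) =
      u ^ (-(d : ℝ) * (β - 1) / 2) * u ^ (-(α * β)) := by
    rw [← rpow_add hu]; ring_nf
  rw [div_rpow (norm_nonneg w) (by positivity), mul_rpow hβ.le hu.le, G_rpow hβ hu, hβpow, hupow,
    rpow_neg hβ.le, rpow_neg hu.le]
  field_simp

theorem G_sqrt_smul {c : ℝ} (hc : 0 < c) (u : EuclideanSpace ℝ (Fin d)) :
    G d c (√c • u) = c ^ (-(d : ℝ) / 2) * G d 1 u := by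
  have hnorm : ‖√c • u‖ ^ 2 = c * ‖u‖ ^ 2 := by
    rw [norm_smul, mul_pow, Real.norm_eq_abs, sq_abs, sq_sqrt hc.le]
  unfold G
  rw [hnorm, mul_comm (2 * π) c, mul_rpow hc.le (by positivity)]
  field_simp

theorem integral_mul_G_sub {c : ℝ} (hc : 0 < c) (f : EuclideanSpace ℝ (Fin d) → ℝ)
    (m : EuclideanSpace ℝ (Fin d)) :
    ∫ z, f z * G d c (z - m) = ∫ u, f (√c • u + m) * G d 1 u := by
  have hscale := Measure.integral_comp_smul_of_nonneg volume
    (fun w : EuclideanSpace ℝ (Fin d) => f (w + m) * G d c w) √c (hR := sqrt_nonneg c)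
  have hsqrt_pow : √c ^ d = c ^ ((d : ℝ) / 2) := by
    rw [sqrt_eq_rpow, ← rpow_natCast, ← rpow_mul hc.le]; ring_nf
  simp only [finrank_euclideanSpace_fin, G_sqrt_smul hc, mul_left_comm (f _),
    integral_const_mul, hsqrt_pow, neg_div, rpow_neg hc.le, smul_eq_mul] at hscale
  rw [← integral_add_right_eq_self _ m]
  simp only [add_sub_cancel_right]
  exact (mul_left_cancel₀ (by positivity) hscale).symm

end G

theorem integral_comp_eq_integral_density_smul {Ω E V : Type*} [MeasurableSpace Ω]
    [MeasurableSpace E] [NormedAddCommGroup V] [NormedSpace ℝ V] {P : Measure Ω} {μ : Measure E}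
    {X : Ω → E} (hX : AEMeasurable X P) {ρ : E → ℝ} (hρ : Measurable ρ)
    (hρ_nonneg : ∀ z, 0 ≤ ρ z) (hlaw : P.map X = μ.withDensity fun z => ENNReal.ofReal (ρ z))
    {F : E → V} (hF : AEStronglyMeasurable F (P.map X)) :
    ∫ ω, F (X ω) ∂P = ∫ z, ρ z • F z ∂μ := by
  rw [← integral_map hX hF, hlaw, integral_withDensity_eq_integral_toReal_smul hρ.ennreal_ofReal
    (ae_of_all _ fun _ => ENNReal.ofReal_lt_top)]
  simp only [ENNReal.toReal_ofReal (hρ_nonneg _)]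

/-- `X` stands for `X_s = B_s - B_τ + x`; only its law, with density `G_{s-τ}(· - x)`, enters. -/
theorem gaussian_moment_formula_general (d : ℕ) (α β τ s t : ℝ) (hβ : 0 < β)
    (hτs : τ < s) (hst : s < t)
    (x y : EuclideanSpace ℝ (Fin d))
    {Ω : Type*} [MeasureSpace Ω] (P : Measure Ω)
    (X : Ω → EuclideanSpace ℝ (Fin d)) (hX : Measurable X)
    (hlaw : Measure.map X P =
      volume.withDensity (fun z => ENNReal.ofReal (G d (s - τ) (z - x)))) :
    (∫ ω, (‖y - X ω‖ / (t - s)) ^ (α * β) * (G d (t - s) (y - X ω)) ^ β ∂P) =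
      ((2 * π) ^ (-(d : ℝ) * (β - 1) / 2) * β ^ (-((d : ℝ) / 2 + α) * β)) *
        (β⁻¹ * (t - s)) ^ (-((d : ℝ) * (β - 1) / 2 + α * β)) *
          G d (β⁻¹ * (t - s) + (s - τ)) (y - x) *
            ∫ z : EuclideanSpace ℝ (Fin d),
              ‖Real.sqrt ((β⁻¹ * (t - s)) * (s - τ) / (β⁻¹ * (t - s) + (s - τ))) • z +
                  ((β⁻¹ * (t - s)) / (β⁻¹ * (t - s) + (s - τ))) • (x - y)‖ ^ (α * β) *
                G d 1 z := by
  have ht₂ : 0 < s - τ := sub_pos.2 hτs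
  have ht₁ : 0 < β⁻¹ * (t - s) := mul_pos (inv_pos.2 hβ) (sub_pos.2 hst)
  set t₁ := β⁻¹ * (t - s) with ht₁_def
  set t₂ := s - τ
  have hβt₁ : t - s = β * t₁ := by rw [ht₁_def, mul_inv_cancel_left₀ hβ.ne']
  set c := t₁ * t₂ / (t₁ + t₂)
  set m := (t₁ + t₂)⁻¹ • (t₁ • x + t₂ • y)
  set C := (2 * π) ^ (-(d : ℝ) * (β - 1) / 2) * β ^ (-((d : ℝ) / 2 + α) * β) *
    t₁ ^ (-((d : ℝ) * (β - 1) / 2 + α * β)) with hC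
  have hintegrand (z : EuclideanSpace ℝ (Fin d)) :
      G d t₂ (z - x) • ((‖y - z‖ / (t - s)) ^ (α * β) * G d (t - s) (y - z) ^ β) =
        C * G d (t₁ + t₂) (y - x) * (‖y - z‖ ^ (α * β) * G d c (z - m)) := by
    rw [smul_eq_mul, hβt₁, rpow_div_mul_G_rpow hβ ht₁, ← hC]
    linear_combination (C * ‖y - z‖ ^ (α * β)) * G_mul_G ht₁ ht₂ x y z
  have hshift (u : EuclideanSpace ℝ (Fin d)) :
      ‖y - (√c • u + m)‖ = ‖√c • u + (t₁ / (t₁ + t₂)) • (x - y)‖ := by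
    rw [← norm_neg]
    congr 1
    match_scalars <;> field_simp
    ring
  rw [integral_comp_eq_integral_density_smul hX.aemeasurable (by fun_prop)
    (fun z => (G_pos ht₂ _).le) hlaw
    (F := fun z => (‖y - z‖ / (t - s)) ^ (α * β) * G d (t - s) (y - z) ^ β)
    (by fun_prop : Measurable _).aestronglyMeasurable]
  simp only [hintegrand, integral_const_mul, integral_mul_G_sub (by positivity : 0 < c), hshift]

/-- The Gaussian moment computation (Lemma 3.2): `X` plays the role of
`X_s = B_s - B_τ + x` for a standard Brownian motion `B`, so that its law has
density `G_{s-τ}(· - x)` with respect to Lebesgue measure. -/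
theorem gaussian_moment_formula (d : ℕ) (α β τ s t : ℝ) (hα : 0 ≤ α) (hβ : 0 < β)
    (hτ : 0 ≤ τ) (hτs : τ < s) (hst : s < t)
    (x y : EuclideanSpace ℝ (Fin d))
    {Ω : Type*} [MeasureSpace Ω] (P : Measure Ω) [IsProbabilityMeasure P]
    (X : Ω → EuclideanSpace ℝ (Fin d)) (hX : Measurable X)
    (hlaw : Measure.map X P =
      volume.withDensity (fun z => ENNReal.ofReal (G d (s - τ) (z - x)))) :
    (∫ ω, (‖y - X ω‖ / (t - s)) ^ (α * β) * (G d (t - s) (y - X ω)) ^ β ∂P) =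
      ((2 * π) ^ (-(d : ℝ) * (β - 1) / 2) * β ^ (-((d : ℝ) / 2 + α) * β)) *
        (β⁻¹ * (t - s)) ^ (-((d : ℝ) * (β - 1) / 2 + α * β)) *
          G d (β⁻¹ * (t - s) + (s - τ)) (y - x) *
            ∫ z : EuclideanSpace ℝ (Fin d),
              ‖Real.sqrt ((β⁻¹ * (t - s)) * (s - τ) / (β⁻¹ * (t - s) + (s - τ))) • z +
                  ((β⁻¹ * (t - s)) / (β⁻¹ * (t - s) + (s - τ))) • (x - y)‖ ^ (α * β) *
                G d 1 z :=
  gaussian_moment_formula_general d α β τ s t hβ hτs hst x y P X hX hlaw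
end
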